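/- arXiv:2405.08394 — 3 statements merged into one kernel-verified Lean document; each statement's English description precedes it below -/
import Mathlib

section
/- For ρ > 0, m ∈ ℝⁿ and U a symmetric trace-free n×n matrix, one has |m|²/(2ρ) ≤ e(ρ,m,U), with equality if and only if U = m⊗m/ρ − (|m|²/(nρ))·I_n. -/
open Matrix

/-! The diagonal entries of `A = m⊗m/ρ − U` are Rayleigh quotients, so `n·λ_max(A) ≥ tr A = |m|²/ρ`.
In the case of equality the positive semidefinite matrix `λ_max(A)·I − A` has trace zero, hence
vanishes, i.e. `A` is a multiple of the identity. -/

/-- Rayleigh-quotient characterization of the largest eigenvalue of a symmetric matrix. -/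
noncomputable def lamMax {n : ℕ} (A : Matrix (Fin n) (Fin n) ℝ) : ℝ :=
  sSup {r : ℝ | ∃ v : Fin n → ℝ, v ⬝ᵥ v = 1 ∧ r = v ⬝ᵥ A.mulVec v}

noncomputable def lamMin {n : ℕ} (A : Matrix (Fin n) (Fin n) ℝ) : ℝ :=
  sInf {r : ℝ | ∃ v : Fin n → ℝ, v ⬝ᵥ v = 1 ∧ r = v ⬝ᵥ A.mulVec v}

noncomputable def opNorm {n : ℕ} (A : Matrix (Fin n) (Fin n) ℝ) : ℝ :=
  sSup {r : ℝ | ∃ v : Fin n → ℝ, v ⬝ᵥ v = 1 ∧ r = |v ⬝ᵥ A.mulVec v|}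

/-- The function e(ρ,m,U) = (n/2)·λ_max(m⊗m/ρ − U). -/
noncomputable def ee (n : ℕ) (ρ : ℝ) (m : Fin n → ℝ) (U : Matrix (Fin n) (Fin n) ℝ) : ℝ :=
  ((n : ℝ) / 2) * lamMax (ρ⁻¹ • Matrix.vecMulVec m m - U)

namespace Matrix

variable {n : ℕ}

lemma abs_apply_le_one_of_dotProduct_self_eq_one {v : Fin n → ℝ} (hv : v ⬝ᵥ v = 1) (i : Fin n) :
    |v i| ≤ 1 := by
  have h : v i * v i ≤ 1 :=
    hv ▸ Finset.single_le_sum (f := fun j ↦ v j * v j) (fun j _ ↦ mul_self_nonneg _)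
      (Finset.mem_univ i)
  nlinarith [abs_nonneg (v i), sq_abs (v i)]

lemma bddAbove_rayleigh (A : Matrix (Fin n) (Fin n) ℝ) :
    BddAbove {r : ℝ | ∃ v : Fin n → ℝ, v ⬝ᵥ v = 1 ∧ r = v ⬝ᵥ A.mulVec v} := by
  refine ⟨∑ i, ∑ j, |A i j|, ?_⟩
  rintro r ⟨v, hv, rfl⟩
  have hvi := abs_apply_le_one_of_dotProduct_self_eq_one hv
  simp only [dotProduct, mulVec, Finset.mul_sum]
  gcongr with i _ j _
  calc v i * (A i j * v j) ≤ |v i| * (|A i j| * |v j|) := by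
        rw [← abs_mul, ← abs_mul]; exact le_abs_self _
    _ ≤ 1 * (|A i j| * 1) := by gcongr <;> exact hvi _
    _ = |A i j| := by ring

lemma dotProduct_mulVec_le_lamMax (A : Matrix (Fin n) (Fin n) ℝ) {v : Fin n → ℝ}
    (hv : v ⬝ᵥ v = 1) : v ⬝ᵥ A.mulVec v ≤ lamMax A :=
  le_csSup (bddAbove_rayleigh A) ⟨v, hv, rfl⟩

lemma dotProduct_mulVec_le_lamMax_mul (A : Matrix (Fin n) (Fin n) ℝ) (v : Fin n → ℝ) :
    v ⬝ᵥ A.mulVec v ≤ lamMax A * (v ⬝ᵥ v) := by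
  rcases eq_or_ne v 0 with rfl | hv
  · simp
  have hs : 0 < v ⬝ᵥ v := by simpa using dotProduct_star_self_pos_iff.mpr hv
  set c := (Real.sqrt (v ⬝ᵥ v))⁻¹
  have hcc : c * c = (v ⬝ᵥ v)⁻¹ := by rw [← mul_inv, Real.mul_self_sqrt hs.le]
  have hunit : (c • v) ⬝ᵥ (c • v) = 1 := by
    rw [smul_dotProduct, dotProduct_smul, smul_smul, smul_eq_mul, hcc, inv_mul_cancel₀ hs.ne']
  have key := dotProduct_mulVec_le_lamMax A hunit
  rw [mulVec_smul, smul_dotProduct, dotProduct_smul, smul_smul, smul_eq_mul, hcc,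
    inv_mul_le_iff₀ hs] at key
  linarith

lemma diag_le_lamMax (A : Matrix (Fin n) (Fin n) ℝ) (i : Fin n) : A i i ≤ lamMax A := by
  simpa [mulVec_single] using dotProduct_mulVec_le_lamMax A (v := Pi.single i 1) (by simp)

lemma trace_le_mul_lamMax (A : Matrix (Fin n) (Fin n) ℝ) : A.trace ≤ n * lamMax A := by
  simpa [trace] using Finset.sum_le_sum fun i (_ : i ∈ Finset.univ) ↦ diag_le_lamMax A i

lemma lamMax_smul_one [NeZero n] (c : ℝ) : lamMax (c • (1 : Matrix (Fin n) (Fin n) ℝ)) = c := by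
  have hset : {r : ℝ | ∃ v : Fin n → ℝ, v ⬝ᵥ v = 1 ∧ r = v ⬝ᵥ (c • 1 : Matrix _ _ ℝ).mulVec v}
      = {c} := by
    ext r
    simp only [smul_mulVec, one_mulVec, dotProduct_smul, smul_eq_mul, Set.mem_ofPred_eq,
      Set.mem_singleton_iff]
    refine ⟨fun ⟨v, hv, hr⟩ ↦ by rw [hr, hv, mul_one], fun hr ↦ ⟨Pi.single 0 1, by simp, ?_⟩⟩
    simp [hr]
  rw [lamMax, hset, csSup_singleton]

lemma posSemidef_lamMax_smul_one_sub {A : Matrix (Fin n) (Fin n) ℝ} (hA : A.IsSymm) :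
    (lamMax A • 1 - A).PosSemidef := by
  refine .of_dotProduct_mulVec_nonneg ?_ fun v ↦ ?_
  · simpa using (isSymm_one.smul (lamMax A)).sub hA
  · simpa [sub_mulVec, smul_mulVec] using dotProduct_mulVec_le_lamMax_mul A v

lemma trace_eq_mul_lamMax_iff [NeZero n] {A : Matrix (Fin n) (Fin n) ℝ} (hA : A.IsSymm) :
    A.trace = n * lamMax A ↔ A = (A.trace / n) • 1 := by
  have hn : (n : ℝ) ≠ 0 := NeZero.ne _
  constructor
  · intro h
    have hB : (lamMax A • 1 - A).trace = 0 := by simp [h, mul_comm]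
    rw [(posSemidef_lamMax_smul_one_sub hA).trace_eq_zero_iff, sub_eq_zero] at hB
    rw [h, mul_div_cancel_left₀ _ hn, hB]
  · intro h
    rw [h, lamMax_smul_one]
    simp [mul_div_cancel₀ _ hn]

end Matrix

theorem ee_lower_bound_general (n : ℕ) (hn : 2 ≤ n) (ρ : ℝ)
    (m : Fin n → ℝ) (U : Matrix (Fin n) (Fin n) ℝ)
    (hsym : U.IsSymm) (htr : U.trace = 0) :
    (m ⬝ᵥ m) / (2 * ρ) ≤ ee n ρ m U ∧
    ((m ⬝ᵥ m) / (2 * ρ) = ee n ρ m U ↔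
      U = ρ⁻¹ • Matrix.vecMulVec m m
          - ((m ⬝ᵥ m) / ((n : ℝ) * ρ)) • (1 : Matrix (Fin n) (Fin n) ℝ)) := by
  have : NeZero n := ⟨by omega⟩
  set A := ρ⁻¹ • vecMulVec m m - U with hA
  have hAsym : A.IsSymm := (IsSymm.smul (transpose_vecMulVec m m) ρ⁻¹).sub hsym
  have htrA : A.trace = (m ⬝ᵥ m) / ρ := by
    rw [hA, trace_sub, trace_smul, trace_vecMulVec, htr, smul_eq_mul, sub_zero, inv_mul_eq_div]
  have hlhs : (m ⬝ᵥ m) / (2 * ρ) = A.trace / 2 := by rw [htrA, div_div, mul_comm]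
  rw [ee, hlhs]
  refine ⟨by linarith [trace_le_mul_lamMax A], ?_⟩
  calc A.trace / 2 = n / 2 * lamMax A ↔ A.trace = n * lamMax A := by
        constructor <;> intro h <;> linarith
    _ ↔ A = (A.trace / n) • 1 := trace_eq_mul_lamMax_iff hAsym
    _ ↔ _ := by
        rw [htrA, div_div, mul_comm ρ, hA, sub_eq_iff_eq_add', eq_sub_iff_add_eq, eq_comm]

/-- |m|²/(2ρ) ≤ e(ρ,m,U), with equality iff U = m⊗m/ρ − (|m|²/(nρ))Iₙ. -/
theorem ee_lower_bound (n : ℕ) (hn : 2 ≤ n) (ρ : ℝ) (hρ : 0 < ρ)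
    (m : Fin n → ℝ) (U : Matrix (Fin n) (Fin n) ℝ)
    (hsym : U.IsSymm) (htr : U.trace = 0) :
    (m ⬝ᵥ m) / (2 * ρ) ≤ ee n ρ m U ∧
    ((m ⬝ᵥ m) / (2 * ρ) = ee n ρ m U ↔
      U = ρ⁻¹ • Matrix.vecMulVec m m
          - ((m ⬝ᵥ m) / ((n : ℝ) * ρ)) • (1 : Matrix (Fin n) (Fin n) ℝ)) :=
  ee_lower_bound_general n hn ρ m U hsym htr
end

section
/- For ρ > 0, m ∈ ℝⁿ and U a symmetric trace-free n×n matrix, the operator norm of U satisfies |U|_∞ ≤ 2·((n−1)/n)·e(ρ,m,U). -/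
/-!
Put `L = λ_max(m mᵀ/ρ - U)`. Since `m mᵀ/ρ` is positive semidefinite, every unit vector `x`
satisfies `-xᵀUx ≤ L`. Extending a unit vector `v` to an orthonormal basis, the vanishing trace
of `U` gives `vᵀUv = -∑ bᵢᵀUbᵢ` over the other `n - 1` basis vectors, hence `vᵀUv ≤ (n - 1) L`.
Together with `-vᵀUv ≤ L` this forces `L ≥ 0`, so `|vᵀUv| ≤ (n - 1) L = 2 ((n - 1) / n) e`.
-/

open Matrix

open scoped InnerProductSpace

section TraceZero

variable {E : Type*} [NormedAddCommGroup E] [InnerProductSpace ℝ E] [FiniteDimensional ℝ E]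

theorem inner_map_self_le_of_trace_eq_zero {T : E →ₗ[ℝ] E} (hT : LinearMap.trace ℝ E T = 0)
    {L : ℝ} (hL : ∀ x : E, ‖x‖ = 1 → -⟪x, T x⟫_ℝ ≤ L) {v : E} (hv : ‖v‖ = 1) :
    ⟪v, T v⟫_ℝ ≤ (Module.finrank ℝ E - 1) * L := by
  classical
  have hv' : Orthonormal ℝ ((↑) : ({v} : Set E) → E) :=
    orthonormal_subsingleton_iff.2 fun x => by rw [x.2]; exact hv
  obtain ⟨u, b, hvu, hb⟩ := hv'.exists_orthonormalBasis_extension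
  replace hvu : v ∈ u := hvu rfl
  have hsum : ⟪v, T v⟫_ℝ + ∑ x ∈ u.erase v, ⟪x, T x⟫_ℝ = 0 := by
    rw [Finset.add_sum_erase u (fun x => ⟪x, T x⟫_ℝ) hvu, ← hT,
      LinearMap.trace_eq_sum_inner T b, hb, ← Finset.sum_coe_sort u]
  have hrest : ∑ x ∈ u.erase v, -⟪x, T x⟫_ℝ ≤ ∑ x ∈ u.erase v, L :=
    Finset.sum_le_sum fun x hx => hL x <| by
      simpa [hb] using b.norm_eq_one ⟨x, Finset.mem_of_mem_erase hx⟩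
  rw [Finset.sum_neg_distrib, Finset.sum_const, Finset.card_erase_of_mem hvu, nsmul_eq_mul,
    Nat.cast_pred (Finset.card_pos.2 ⟨v, hvu⟩)] at hrest
  rw [Module.finrank_eq_card_finset_basis b.toBasis]
  linarith

theorem abs_inner_map_self_le_of_trace_eq_zero (hE : 2 ≤ Module.finrank ℝ E) {T : E →ₗ[ℝ] E}
    (hT : LinearMap.trace ℝ E T = 0) {L : ℝ} (hL : ∀ x : E, ‖x‖ = 1 → -⟪x, T x⟫_ℝ ≤ L)
    {v : E} (hv : ‖v‖ = 1) :
    |⟪v, T v⟫_ℝ| ≤ (Module.finrank ℝ E - 1) * L := by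
  have hupper := inner_map_self_le_of_trace_eq_zero hT hL hv
  have hlower := hL v hv
  have hE' : (2 : ℝ) ≤ Module.finrank ℝ E := by exact_mod_cast hE
  rw [abs_le]
  constructor <;> nlinarith

end TraceZero

section Rayleigh

variable {n : ℕ}

theorem EuclideanSpace.norm_eq_one_iff_dotProduct_self (x : EuclideanSpace ℝ (Fin n)) :
    ‖x‖ = 1 ↔ x.ofLp ⬝ᵥ x.ofLp = 1 := by
  rw [← pow_eq_one_iff_of_nonneg (norm_nonneg x) two_ne_zero, ← real_inner_self_eq_norm_sq,
    EuclideanSpace.inner_eq_star_dotProduct, star_trivial]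

theorem Matrix.inner_toEuclideanLin_self (A : Matrix (Fin n) (Fin n) ℝ)
    (x : EuclideanSpace ℝ (Fin n)) :
    ⟪x, toEuclideanLin A x⟫_ℝ = x.ofLp ⬝ᵥ A *ᵥ x.ofLp := by
  rw [EuclideanSpace.inner_eq_star_dotProduct]
  simp [dotProduct_comm]

theorem Matrix.trace_toEuclideanLin (A : Matrix (Fin n) (Fin n) ℝ) :
    LinearMap.trace ℝ _ (toEuclideanLin A) = A.trace := by
  rw [toEuclideanLin, toLpLin_eq_toLin,
    LinearMap.trace_eq_matrix_trace ℝ (PiLp.basisFun 2 ℝ (Fin n)), LinearMap.toMatrix_toLin]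

theorem abs_rayleigh_le_of_trace_eq_zero (hn : 2 ≤ n) {U : Matrix (Fin n) (Fin n) ℝ}
    (htr : U.trace = 0) {L : ℝ} (hL : ∀ v : Fin n → ℝ, v ⬝ᵥ v = 1 → -(v ⬝ᵥ U *ᵥ v) ≤ L)
    {v : Fin n → ℝ} (hv : v ⬝ᵥ v = 1) :
    |v ⬝ᵥ U *ᵥ v| ≤ (n - 1) * L := by
  have key := abs_inner_map_self_le_of_trace_eq_zero (E := EuclideanSpace ℝ (Fin n))
    (by rwa [finrank_euclideanSpace_fin]) (by rw [trace_toEuclideanLin, htr])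
    (fun x hx => by
      rw [inner_toEuclideanLin_self]
      exact hL _ ((EuclideanSpace.norm_eq_one_iff_dotProduct_self x).1 hx))
    ((EuclideanSpace.norm_eq_one_iff_dotProduct_self (WithLp.toLp 2 v)).2 hv)
  rwa [inner_toEuclideanLin_self, finrank_euclideanSpace_fin] at key

theorem isCompact_setOf_dotProduct_self_eq_one : IsCompact {v : Fin n → ℝ | v ⬝ᵥ v = 1} := by
  refine (isCompact_closedBall 0 1).of_isClosed_subset
    (isClosed_eq (by fun_prop) continuous_const) fun v hv => ?_
  rw [mem_closedBall_zero_iff, pi_norm_le_iff_of_nonneg zero_le_one]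
  intro i
  rw [Real.norm_eq_abs, abs_le_one_iff_mul_self_le_one]
  calc v i * v i ≤ v ⬝ᵥ v :=
        Finset.single_le_sum (f := fun j => v j * v j) (fun j _ => mul_self_nonneg _)
          (Finset.mem_univ i)
    _ = 1 := hv

theorem rayleigh_le_lamMax (A : Matrix (Fin n) (Fin n) ℝ) {v : Fin n → ℝ} (hv : v ⬝ᵥ v = 1) :
    v ⬝ᵥ A *ᵥ v ≤ lamMax A := by
  obtain ⟨C, hC⟩ := (isCompact_setOf_dotProduct_self_eq_one.image
    (f := fun v : Fin n → ℝ => v ⬝ᵥ A *ᵥ v) (by fun_prop)).bddAbove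
  exact le_csSup ⟨C, by rintro _ ⟨w, hw, rfl⟩; exact hC ⟨w, hw, rfl⟩⟩ ⟨v, hv, rfl⟩

theorem rayleigh_vecMulVec_self (m v : Fin n → ℝ) : v ⬝ᵥ vecMulVec m m *ᵥ v = (m ⬝ᵥ v) ^ 2 := by
  rw [vecMulVec_mulVec, dotProduct_smul, op_smul_eq_mul, dotProduct_comm v m, sq]

theorem neg_rayleigh_le_lamMax {ρ : ℝ} (hρ : 0 ≤ ρ) (m : Fin n → ℝ)
    (U : Matrix (Fin n) (Fin n) ℝ) {v : Fin n → ℝ} (hv : v ⬝ᵥ v = 1) :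
    -(v ⬝ᵥ U *ᵥ v) ≤ lamMax (ρ⁻¹ • vecMulVec m m - U) := by
  have h := rayleigh_le_lamMax (ρ⁻¹ • vecMulVec m m - U) hv
  rw [sub_mulVec, dotProduct_sub, smul_mulVec, dotProduct_smul, rayleigh_vecMulVec_self,
    smul_eq_mul] at h
  have : 0 ≤ ρ⁻¹ * (m ⬝ᵥ v) ^ 2 := by positivity
  linarith

theorem opNorm_le [NeZero n] {A : Matrix (Fin n) (Fin n) ℝ} {c : ℝ}
    (h : ∀ v : Fin n → ℝ, v ⬝ᵥ v = 1 → |v ⬝ᵥ A *ᵥ v| ≤ c) : opNorm A ≤ c :=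
  csSup_le ⟨_, Pi.single 0 1, by simp, rfl⟩ fun _ ⟨v, hv, hr⟩ => hr ▸ h v hv

end Rayleigh

theorem opNorm_le_ee_general (n : ℕ) (hn : 2 ≤ n) (ρ : ℝ) (hρ : 0 < ρ)
    (m : Fin n → ℝ) (U : Matrix (Fin n) (Fin n) ℝ)
    (htr : U.trace = 0) :
    opNorm U ≤ 2 * (((n : ℝ) - 1) / (n : ℝ)) * ee n ρ m U := by
  have : NeZero n := ⟨by omega⟩
  have hrhs : 2 * (((n : ℝ) - 1) / n) * ee n ρ m U
      = (n - 1) * lamMax (ρ⁻¹ • vecMulVec m m - U) := by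
    rw [ee]
    field_simp
  rw [hrhs]
  exact opNorm_le fun v hv =>
    abs_rayleigh_le_of_trace_eq_zero hn htr (fun _ => neg_rayleigh_le_lamMax hρ.le m U) hv

/-- |U|_∞ ≤ 2((n−1)/n)·e(ρ,m,U). -/
theorem opNorm_le_ee (n : ℕ) (hn : 2 ≤ n) (ρ : ℝ) (hρ : 0 < ρ)
    (m : Fin n → ℝ) (U : Matrix (Fin n) (Fin n) ℝ)
    (hsym : U.IsSymm) (htr : U.trace = 0) :
    opNorm U ≤ 2 * (((n : ℝ) - 1) / (n : ℝ)) * ee n ρ m U :=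
  opNorm_le_ee_general n hn ρ hρ m U htr
end

section
/- Let n ≥ 3, ρ̄ > 0, q̄ > 0, and let K_{ρ̄,q̄} = {(m,U) ∈ ℝⁿ×S₀ⁿˣⁿ : m⊗m/ρ̄ − U = q̄·I_n}. Then for any two distinct elements w', w'' ∈ K_{ρ̄,q̄}, the difference w' − w'' lies in the wave cone Λ, i.e., there exists ξ ∈ ℝⁿ\{0} with ξ·(m'−m'') = 0 and (U'−U'')ξ = 0. -/
/-!
Since `n ≥ 3`, some `ξ ≠ 0` is orthogonal to both `m'` and `m''`. On such a `ξ` the rank-one parts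
`m ⊗ m / ρ̄` vanish, so `U'` and `U''` both act as `-q̄`, and `(U' - U'') ξ = 0`.
-/

open Matrix

theorem Matrix.exists_ne_zero_forall_dotProduct_eq_zero {K ι : Type*} [Field K] [Fintype ι]
    {k : ℕ} (v : Fin k → ι → K) (hk : k < Fintype.card ι) :
    ∃ ξ : ι → K, ξ ≠ 0 ∧ ∀ i, v i ⬝ᵥ ξ = 0 := by
  have hker : LinearMap.ker (Matrix.of v).mulVecLin ≠ ⊥ :=
    LinearMap.ker_ne_bot_of_finrank_lt (by simpa using hk)
  obtain ⟨ξ, hξ, hξ0⟩ := Submodule.exists_mem_ne_zero_of_ne_bot hker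
  exact ⟨ξ, hξ0, fun i => congrFun (f := (Matrix.of v) *ᵥ ξ) hξ i⟩

theorem Matrix.vecMulVec_self_mulVec_of_dotProduct_eq_zero {K ι : Type*} [CommRing K]
    [Fintype ι] {u ξ : ι → K} (h : u ⬝ᵥ ξ = 0) : vecMulVec u u *ᵥ ξ = 0 := by
  simp [vecMulVec_mulVec, h]

theorem mulVec_eq_neg_smul_of_dotProduct_eq_zero {n : Type*} [Fintype n] [DecidableEq n]
    {ρ q : ℝ} {m ξ : n → ℝ} {U : Matrix n n ℝ}
    (hK : ρ⁻¹ • vecMulVec m m - U = q • (1 : Matrix n n ℝ)) (hξ : m ⬝ᵥ ξ = 0) :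
    U *ᵥ ξ = -(q • ξ) := by
  have hU : U = ρ⁻¹ • vecMulVec m m - q • (1 : Matrix n n ℝ) := by
    rw [← hK, sub_sub_cancel]
  rw [hU, sub_mulVec, smul_mulVec, vecMulVec_self_mulVec_of_dotProduct_eq_zero hξ,
    smul_mulVec, one_mulVec, smul_zero, zero_sub]

theorem diff_mem_wave_cone_general (n : ℕ) (hn : 3 ≤ n) (ρ q : ℝ)
    (m' m'' : Fin n → ℝ) (U' U'' : Matrix (Fin n) (Fin n) ℝ)
    (hK' : ρ⁻¹ • Matrix.vecMulVec m' m' - U' = q • (1 : Matrix (Fin n) (Fin n) ℝ))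
    (hK'' : ρ⁻¹ • Matrix.vecMulVec m'' m'' - U'' = q • (1 : Matrix (Fin n) (Fin n) ℝ)) :
    ∃ ξ : Fin n → ℝ, ξ ≠ 0 ∧ ξ ⬝ᵥ (m' - m'') = 0 ∧ (U' - U'').mulVec ξ = 0 := by
  obtain ⟨ξ, hξ0, hξ⟩ :=
    exists_ne_zero_forall_dotProduct_eq_zero ![m', m''] (by simp only [Fintype.card_fin]; omega)
  have h' : m' ⬝ᵥ ξ = 0 := hξ 0
  have h'' : m'' ⬝ᵥ ξ = 0 := hξ 1
  refine ⟨ξ, hξ0, ?_, ?_⟩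
  · rw [dotProduct_comm, sub_dotProduct, h', h'', sub_zero]
  · rw [sub_mulVec, mulVec_eq_neg_smul_of_dotProduct_eq_zero hK' h',
      mulVec_eq_neg_smul_of_dotProduct_eq_zero hK'' h'', sub_self]

/-- for n ≥ 3, the difference of two distinct elements of
K_{ρ̄,q̄} = {(m,U) ∈ ℝⁿ×S₀ⁿˣⁿ : m⊗m/ρ̄ − U = q̄·Iₙ} lies in the wave cone Λ. -/
theorem diff_mem_wave_cone (n : ℕ) (hn : 3 ≤ n) (ρ q : ℝ) (hρ : 0 < ρ) (hq : 0 < q)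
    (m' m'' : Fin n → ℝ) (U' U'' : Matrix (Fin n) (Fin n) ℝ)
    (hsym' : U'.IsSymm) (htr' : U'.trace = 0)
    (hsym'' : U''.IsSymm) (htr'' : U''.trace = 0)
    (hK' : ρ⁻¹ • Matrix.vecMulVec m' m' - U' = q • (1 : Matrix (Fin n) (Fin n) ℝ))
    (hK'' : ρ⁻¹ • Matrix.vecMulVec m'' m'' - U'' = q • (1 : Matrix (Fin n) (Fin n) ℝ))
    (hne : (m', U') ≠ (m'', U'')) :
    ∃ ξ : Fin n → ℝ, ξ ≠ 0 ∧ ξ ⬝ᵥ (m' - m'') = 0 ∧ (U' - U'').mulVec ξ = 0 :=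
  diff_mem_wave_cone_general n hn ρ q m' m'' U' U'' hK' hK''
end
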